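/- arXiv:1712.08721 — 11 statements merged into one kernel-verified Lean document; each statement's English description precedes it below -/
import Mathlib

section
/- Let f : 2^V → ℝ be submodular, X ⊆ V, u, v distinct elements of V \ X with f(X ∪ {u}) + f(X ∪ {v}) > f(X ∪ {u,v}) + f(X), and S ⊆ V with |S ∩ {u,v}| = 1. Let g = f ∘ σ_S and Y = (X △ S) \ {u,v}. Then g(Y ∪ {u}) + g(Y ∪ {v}) < g(Y ∪ {u,v}) + g(Y); in particular, g is not submodular. -/
open scoped symmDiff

def Submodular {α : Type*} [DecidableEq α] (f : Finset α → ℝ) : Prop :=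
  ∀ A B : Finset α, f A + f B ≥ f (A ∪ B) + f (A ∩ B)

set_option maxHeartbeats 1000000 in
theorem sd_reverses_strict_two_face {α : Type*} [DecidableEq α]
    (f : Finset α → ℝ) (hf : Submodular f)
    (X : Finset α) (u v : α) (huv : u ≠ v) (hu : u ∉ X) (hv : v ∉ X)
    (hstrict : f (X ∪ {u}) + f (X ∪ {v}) > f (X ∪ {u, v}) + f X)
    (S : Finset α) (hS : (S ∩ {u, v}).card = 1)
    (g : Finset α → ℝ) (hg : ∀ Z, g Z = f (Z ∆ S))
    (Y : Finset α) (hY : Y = (X ∆ S) \ {u, v}) :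
    g (Y ∪ {u}) + g (Y ∪ {v}) < g (Y ∪ {u, v}) + g Y ∧ ¬ Submodular g := by
  have huY : u ∉ Y := by simp [hY]
  have hvY : v ∉ Y := by simp [hY]
  have hcase : (u ∈ S ∧ v ∉ S) ∨ (u ∉ S ∧ v ∈ S) := by
    by_cases h1 : u ∈ S <;> by_cases h2 : v ∈ S
    · exfalso
      have : ({u, v} : Finset α) ⊆ S ∩ {u, v} := by
        intro a ha; simp only [Finset.mem_insert, Finset.mem_singleton] at ha
        rcases ha with rfl | rfl <;> simp [h1, h2]
      have hc := Finset.card_le_card this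
      rw [hS, Finset.card_insert_of_notMem (by simpa using huv),
        Finset.card_singleton] at hc
      omega
    · exact Or.inl ⟨h1, h2⟩
    · exact Or.inr ⟨h1, h2⟩
    · exfalso
      have : S ∩ {u, v} = ∅ := by
        ext a; simp only [Finset.mem_inter, Finset.mem_insert, Finset.mem_singleton,
          Finset.notMem_empty, iff_false]
        rintro ⟨haS, rfl | rfl⟩ <;> contradiction
      rw [this] at hS; simp at hS
  have key : g (Y ∪ {u}) + g (Y ∪ {v}) = f X + f (X ∪ {u, v}) ∧
      g (Y ∪ {u, v}) + g Y = f (X ∪ {u}) + f (X ∪ {v}) := by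
    rcases hcase with ⟨hus, hvs⟩ | ⟨hus, hvs⟩
    · have e1 : (Y ∪ {u}) ∆ S = X := by
        ext a; by_cases h1 : a = u
        · subst h1; simp [Finset.mem_symmDiff, huY, hus, hu]
        · by_cases h2 : a = v
          · subst h2; simp [Finset.mem_symmDiff, hvY, hvs, hv, Ne.symm huv]
          · simp only [Finset.mem_symmDiff, Finset.mem_union, Finset.mem_singleton, hY,
              Finset.mem_sdiff, Finset.mem_insert, h1, h2, or_false, not_false_iff, and_true]
            tauto
      have e2 : (Y ∪ {v}) ∆ S = X ∪ {u, v} := by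
        ext a; by_cases h1 : a = u
        · subst h1; simp [Finset.mem_symmDiff, huY, hus, hu, huv]
        · by_cases h2 : a = v
          · subst h2; simp [Finset.mem_symmDiff, hvY, hvs, hv, Ne.symm huv]
          · simp only [Finset.mem_symmDiff, Finset.mem_union, Finset.mem_singleton, hY,
              Finset.mem_sdiff, Finset.mem_insert, h1, h2, or_false, not_false_iff, and_true]
            tauto
      have e3 : (Y ∪ {u, v}) ∆ S = X ∪ {v} := by
        ext a; by_cases h1 : a = u
        · subst h1; simp [Finset.mem_symmDiff, huY, hus, hu, huv]
        · by_cases h2 : a = v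
          · subst h2; simp [Finset.mem_symmDiff, hvY, hvs, hv, Ne.symm huv]
          · simp only [Finset.mem_symmDiff, Finset.mem_union, Finset.mem_singleton, hY,
              Finset.mem_sdiff, Finset.mem_insert, h1, h2, or_false, not_false_iff, and_true]
            tauto
      have e4 : Y ∆ S = X ∪ {u} := by
        ext a; by_cases h1 : a = u
        · subst h1; simp [Finset.mem_symmDiff, huY, hus, hu]
        · by_cases h2 : a = v
          · subst h2; simp [Finset.mem_symmDiff, hvY, hvs, hv, Ne.symm huv]
          · simp only [Finset.mem_symmDiff, Finset.mem_union, Finset.mem_singleton, hY,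
              Finset.mem_sdiff, Finset.mem_insert, h1, h2, or_false, not_false_iff, and_true]
            tauto
      refine ⟨?_, ?_⟩
      · rw [hg, hg, e1, e2]
      · rw [hg, hg, e3, e4]; ring
    · have e1 : (Y ∪ {u}) ∆ S = X ∪ {u, v} := by
        ext a; by_cases h1 : a = u
        · subst h1; simp [Finset.mem_symmDiff, huY, hus, hu]
        · by_cases h2 : a = v
          · subst h2; simp [Finset.mem_symmDiff, hvY, hvs, hv, Ne.symm huv]
          · simp only [Finset.mem_symmDiff, Finset.mem_union, Finset.mem_singleton, hY,
              Finset.mem_sdiff, Finset.mem_insert, h1, h2, or_false, not_false_iff, and_true]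
            tauto
      have e2 : (Y ∪ {v}) ∆ S = X := by
        ext a; by_cases h1 : a = u
        · subst h1; simp [Finset.mem_symmDiff, huY, hus, hu, huv]
        · by_cases h2 : a = v
          · subst h2; simp [Finset.mem_symmDiff, hvY, hvs, hv, Ne.symm huv]
          · simp only [Finset.mem_symmDiff, Finset.mem_union, Finset.mem_singleton, hY,
              Finset.mem_sdiff, Finset.mem_insert, h1, h2, or_false, not_false_iff, and_true]
            tauto
      have e3 : (Y ∪ {u, v}) ∆ S = X ∪ {u} := by
        ext a; by_cases h1 : a = u
        · subst h1; simp [Finset.mem_symmDiff, huY, hus, hu, huv]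
        · by_cases h2 : a = v
          · subst h2; simp [Finset.mem_symmDiff, hvY, hvs, hv, Ne.symm huv]
          · simp only [Finset.mem_symmDiff, Finset.mem_union, Finset.mem_singleton, hY,
              Finset.mem_sdiff, Finset.mem_insert, h1, h2, or_false, not_false_iff, and_true]
            tauto
      have e4 : Y ∆ S = X ∪ {v} := by
        ext a; by_cases h1 : a = u
        · subst h1; simp [Finset.mem_symmDiff, huY, hus, hu, huv]
        · by_cases h2 : a = v
          · subst h2; simp [Finset.mem_symmDiff, hvY, hvs, hv, Ne.symm huv]
          · simp only [Finset.mem_symmDiff, Finset.mem_union, Finset.mem_singleton, hY,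
              Finset.mem_sdiff, Finset.mem_insert, h1, h2, or_false, not_false_iff, and_true]
            tauto
      refine ⟨?_, ?_⟩
      · rw [hg, hg, e1, e2]; ring
      · rw [hg, hg, e3, e4]
  have hlt : g (Y ∪ {u}) + g (Y ∪ {v}) < g (Y ∪ {u, v}) + g Y := by
    rw [key.1, key.2]; linarith
  refine ⟨hlt, fun hsub => ?_⟩
  have hunion : (Y ∪ {u}) ∪ (Y ∪ {v}) = Y ∪ {u, v} := by
    ext a; simp [Finset.mem_insert]; tauto
  have hinter : (Y ∪ {u}) ∩ (Y ∪ {v}) = Y := by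
    ext a; simp only [Finset.mem_inter, Finset.mem_union, Finset.mem_singleton]
    constructor
    · rintro ⟨h1 | rfl, h2 | h2⟩
      · exact h1
      · exact h1
      · exact h2
      · exact absurd h2 huv
    · intro h; exact ⟨Or.inl h, Or.inl h⟩
  have := hsub (Y ∪ {u}) (Y ∪ {v})
  rw [hunion, hinter] at this
  linarith
end

section
/- Let f : 2^V → ℝ be submodular and S ⊆ V. Suppose that for every pair of distinct u, v ∈ V with |S ∩ {u,v}| = 1, and for every X ⊆ V \ {u,v}, equality f(X ∪ {u}) + f(X ∪ {v}) = f(X ∪ {u,v}) + f(X) holds. Then the function g(X) = f(X △ S) is submodular. -/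
open scoped symmDiff

section Aux
variable {α : Type*} [DecidableEq α]

lemma submod_local (f : Finset α → ℝ) (hf : Submodular f) {u v : α} (huv : u ≠ v)
    {X : Finset α} (hu : u ∉ X) (hv : v ∉ X) :
    f (insert u X) + f (insert v X) ≥ f (insert u (insert v X)) + f X := by
  have h := hf (insert u X) (insert v X)
  have h1 : insert u X ∪ insert v X = insert u (insert v X) := by
    ext a; simp [Finset.mem_insert, Finset.mem_union]; tauto
  have h2 : insert u X ∩ insert v X = X := by
    ext a
    simp only [Finset.mem_inter, Finset.mem_insert]
    constructor
    · rintro ⟨h1 | h1, h2 | h2⟩ <;> first | assumption | (exfalso; exact huv (h1 ▸ h2 ▸ rfl))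
    · intro h; exact ⟨Or.inr h, Or.inr h⟩
  rw [h1, h2] at h; exact h

lemma local_marginal (f : Finset α → ℝ)
    (hl : ∀ u v : α, u ≠ v → ∀ X : Finset α, u ∉ X → v ∉ X →
      f (insert u X) + f (insert v X) ≥ f (insert u (insert v X)) + f X) :
    ∀ (n : ℕ) (X Y : Finset α), (Y \ X).card = n → X ⊆ Y → ∀ u, u ∉ Y →
      f (insert u X) - f X ≥ f (insert u Y) - f Y := by
  intro n
  induction n with
  | zero =>
    intro X Y hcard hXY u hu
    have hYX : Y ⊆ X := Finset.sdiff_eq_empty_iff_subset.mp (Finset.card_eq_zero.mp hcard)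
    have : Y = X := Finset.Subset.antisymm hYX hXY
    rw [this]
  | succ n ih =>
    intro X Y hcard hXY u hu
    obtain ⟨v, hv⟩ : (Y \ X).Nonempty := Finset.card_pos.mp (by omega)
    have hvY : v ∈ Y := (Finset.mem_sdiff.mp hv).1
    have hvX : v ∉ X := (Finset.mem_sdiff.mp hv).2
    have huv : u ≠ v := fun h => hu (h ▸ hvY)
    have huX : u ∉ X := fun h => hu (hXY h)
    have h1 : insert v X ⊆ Y := Finset.insert_subset hvY hXY
    have hcard' : (Y \ insert v X).card = n := by
      have he : Y \ insert v X = (Y \ X).erase v := by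
        ext a
        simp only [Finset.mem_sdiff, Finset.mem_insert, Finset.mem_erase, not_or]
        tauto
      rw [he, Finset.card_erase_of_mem hv, hcard]; omega
    have h2 := ih (insert v X) Y hcard' h1 u hu
    have h3 := hl u v huv X huX hvX
    linarith

lemma local_submodular (f : Finset α → ℝ)
    (hl : ∀ u v : α, u ≠ v → ∀ X : Finset α, u ∉ X → v ∉ X →
      f (insert u X) + f (insert v X) ≥ f (insert u (insert v X)) + f X) :
    Submodular f := by
  have key : ∀ (n : ℕ) (A B : Finset α), (A \ B).card = n →
      f A + f B ≥ f (A ∪ B) + f (A ∩ B) := by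
    intro n
    induction n with
    | zero =>
      intro A B h
      have hAB : A ⊆ B := Finset.sdiff_eq_empty_iff_subset.mp (Finset.card_eq_zero.mp h)
      rw [Finset.union_eq_right.mpr hAB, Finset.inter_eq_left.mpr hAB]
      linarith
    | succ n ih =>
      intro A B h
      obtain ⟨u, hu⟩ : (A \ B).Nonempty := Finset.card_pos.mp (by omega)
      have huA : u ∈ A := (Finset.mem_sdiff.mp hu).1
      have huB : u ∉ B := (Finset.mem_sdiff.mp hu).2
      set A' := A.erase u with hA'
      have huA' : u ∉ A' := Finset.notMem_erase u A
      have hcard' : (A' \ B).card = n := by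
        have he : A' \ B = (A \ B).erase u := by
          ext a
          simp only [hA', Finset.mem_sdiff, Finset.mem_erase]
          tauto
        rw [he, Finset.card_erase_of_mem hu, h]; omega
      have h1 := ih A' B hcard'
      have huAB : u ∉ A' ∪ B := by
        simp only [Finset.mem_union]
        rintro (h | h) <;> [exact huA' h; exact huB h]
      have hm := local_marginal f hl (((A' ∪ B) \ A').card) A' (A' ∪ B) rfl
        Finset.subset_union_left u huAB
      have e1 : insert u A' = A := Finset.insert_erase huA
      have e2 : insert u (A' ∪ B) = A ∪ B := by
        ext a
        simp only [hA', Finset.mem_insert, Finset.mem_union, Finset.mem_erase]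
        constructor
        · rintro (rfl | (⟨_, h⟩ | h)) <;> tauto
        · rintro (h | h)
          · by_cases ha : a = u <;> tauto
          · tauto
      have e3 : A' ∩ B = A ∩ B := by
        ext a
        simp only [hA', Finset.mem_inter, Finset.mem_erase]
        constructor
        · tauto
        · rintro ⟨h1, h2⟩; exact ⟨⟨fun hh => huB (hh ▸ h2), h1⟩, h2⟩
      rw [e1, e2] at hm
      rw [e3] at h1
      linarith
  intro A B
  exact key ((A \ B).card) A B rfl

lemma symmDiff_insert_notMem {a : α} {T S : Finset α} (ha : a ∉ S) :
    (insert a T) ∆ S = insert a (T ∆ S) := by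
  ext b
  simp only [Finset.mem_symmDiff, Finset.mem_insert]
  by_cases hb : b = a
  · subst hb; tauto
  · tauto

lemma symmDiff_insert_mem {a : α} {T S : Finset α} (ha : a ∈ S) :
    (insert a T) ∆ S = (T ∆ S).erase a := by
  ext b
  simp only [Finset.mem_symmDiff, Finset.mem_insert, Finset.mem_erase]
  by_cases hb : b = a
  · subst hb; tauto
  · tauto

end Aux

theorem sd_submodular_of_equalities {α : Type*} [DecidableEq α] [Fintype α]
    (f : Finset α → ℝ) (hf : Submodular f) (S : Finset α)
    (heq : ∀ u v : α, u ≠ v → (S ∩ {u, v}).card = 1 →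
      ∀ X : Finset α, u ∉ X → v ∉ X →
        f (X ∪ {u}) + f (X ∪ {v}) = f (X ∪ {u, v}) + f X) :
    Submodular (fun X => f (X ∆ S)) := by
  apply local_submodular
  intro u v huv X hu hv
  set Y := X ∆ S with hY
  have huvY : u ∉ insert v X := by simp [huv, hu]
  -- helper: handle mixed case via heq
  have mixed : ∀ (u v : α), u ≠ v → u ∈ S → v ∉ S → u ∉ X → v ∉ X →
      f ((insert u X) ∆ S) + f ((insert v X) ∆ S) =
      f ((insert u (insert v X)) ∆ S) + f (X ∆ S) := by
    intro u v huv huS hvS hu hv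
    have huY : u ∈ Y := by rw [hY, Finset.mem_symmDiff]; tauto
    have hvY : v ∉ Y := by rw [hY, Finset.mem_symmDiff]; tauto
    set Z := Y.erase u with hZ
    have huZ : u ∉ Z := Finset.notMem_erase u Y
    have hvZ : v ∉ Z := fun h => hvY (Finset.mem_of_mem_erase h)
    have hheq := heq u v huv (by
      have : S ∩ {u, v} = {u} := by
        ext a
        simp only [Finset.mem_inter, Finset.mem_insert, Finset.mem_singleton]
        constructor
        · rintro ⟨hS, rfl | rfl⟩
          · rfl
          · exact absurd hS hvS
        · rintro rfl
          exact ⟨huS, Or.inl rfl⟩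
      rw [this]; exact Finset.card_singleton u) Z huZ hvZ
    have eu : Z ∪ {u} = insert u Z := by ext a; simp [or_comm]
    have ev : Z ∪ {v} = insert v Z := by ext a; simp [or_comm]
    have euv : Z ∪ {u, v} = insert u (insert v Z) := by
      ext a; simp only [Finset.mem_union, Finset.mem_insert, Finset.mem_singleton]; tauto
    rw [eu, ev, euv] at hheq
    -- rewrite the four symmDiffs
    have r1 : (insert u X) ∆ S = Z := by rw [symmDiff_insert_mem huS, ← hY, hZ]
    have r2 : (insert v X) ∆ S = insert v Y := by rw [symmDiff_insert_notMem hvS, ← hY]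
    have r3 : (insert u (insert v X)) ∆ S = insert v Z := by
      rw [symmDiff_insert_mem huS, symmDiff_insert_notMem hvS, ← hY, hZ]
      exact Finset.erase_insert_of_ne (fun h => huv h.symm)
    have r4 : insert v Y = insert v (insert u Z) := by
      rw [hZ, Finset.insert_erase huY]
    have r5 : insert u (insert v Z) = insert v (insert u Z) := Finset.insert_comm u v Z
    have r6 : X ∆ S = insert u Z := by rw [← hY, hZ, Finset.insert_erase huY]
    rw [r5] at hheq
    rw [r1, r2, r3, r6, r4]
    linarith
  by_cases huS : u ∈ S <;> by_cases hvS : v ∈ S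
  · -- both in S
    have huY : u ∈ Y := by rw [hY, Finset.mem_symmDiff]; tauto
    have hvY : v ∈ Y := by rw [hY, Finset.mem_symmDiff]; tauto
    set Z := (Y.erase u).erase v with hZ
    have hvZ : v ∉ Z := Finset.notMem_erase v _
    have huZ : u ∉ Z := fun h => Finset.notMem_erase u Y (Finset.mem_of_mem_erase h)
    have hvYu : v ∈ Y.erase u := Finset.mem_erase.mpr ⟨fun h => huv h.symm, hvY⟩
    have r1 : (insert u X) ∆ S = insert v Z := by
      rw [symmDiff_insert_mem huS, ← hY, hZ, Finset.insert_erase hvYu]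
    have huYv : u ∈ Y.erase v := Finset.mem_erase.mpr ⟨fun h => huv h, huY⟩
    have r2 : (insert v X) ∆ S = insert u Z := by
      rw [symmDiff_insert_mem hvS, ← hY, hZ, Finset.erase_right_comm, Finset.insert_erase huYv]
    have r3 : (insert u (insert v X)) ∆ S = Z := by
      rw [symmDiff_insert_mem huS, symmDiff_insert_mem hvS, ← hY, hZ, Finset.erase_right_comm]
    have r4 : Y = insert u (insert v Z) := by
      rw [hZ, Finset.insert_erase hvYu, Finset.insert_erase huY]
    rw [r1, r2, r3, r4]
    have := submod_local f hf (fun h : v = u => huv h.symm) hvZ huZ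
    rw [Finset.insert_comm v u Z] at this
    linarith
  · exact ge_of_eq (mixed u v huv huS hvS hu hv)
  · have h := mixed v u (fun h => huv h.symm) hvS huS hv hu
    rw [Finset.insert_comm v u X, ← hY] at h
    linarith [h]
  · -- neither in S
    have huY : u ∉ Y := by rw [hY, Finset.mem_symmDiff]; tauto
    have hvY : v ∉ Y := by rw [hY, Finset.mem_symmDiff]; tauto
    rw [symmDiff_insert_notMem huS, symmDiff_insert_notMem hvS,
      symmDiff_insert_notMem huS, symmDiff_insert_notMem hvS]
    exact submod_local f hf huv huY hvY
end

section
/- Let f : 2^V → ℝ be submodular and S ⊆ V. Suppose there exist distinct u, v ∈ V with |S ∩ {u,v}| = 1 and some X ⊆ V \ {u,v} with f(X ∪ {u}) + f(X ∪ {v}) > f(X ∪ {u,v}) + f(X). Then the function g(X) = f(X △ S) is not submodular. -/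
open scoped symmDiff

lemma key_aux {α : Type*} [DecidableEq α] (f : Finset α → ℝ) (S : Finset α)
    (u v : α) (X : Finset α) (huv : u ≠ v) (hus : u ∈ S) (hvs : v ∉ S)
    (hux : u ∉ X) (hvx : v ∉ X)
    (hstr : f (X ∪ {u}) + f (X ∪ {v}) > f (X ∪ {u, v}) + f X)
    (hg : Submodular (fun X => f (X ∆ S))) : False := by
  have h := hg (X ∆ S) ((X ∪ {u, v}) ∆ S)
  simp only at h
  have e1 : (X ∆ S) ∆ S = X := symmDiff_symmDiff_cancel_right S X
  have e2 : ((X ∪ {u, v}) ∆ S) ∆ S = X ∪ {u, v} :=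
    symmDiff_symmDiff_cancel_right S _
  have e3 : ((X ∆ S) ∪ ((X ∪ {u, v}) ∆ S)) ∆ S = X ∪ {v} := by
    ext a
    by_cases hau : a = u <;> by_cases hav : a = v <;>
      simp_all [Finset.mem_symmDiff] <;> tauto
  have e4 : ((X ∆ S) ∩ ((X ∪ {u, v}) ∆ S)) ∆ S = X ∪ {u} := by
    ext a
    by_cases hau : a = u <;> by_cases hav : a = v <;>
      simp_all [Finset.mem_symmDiff] <;> tauto
  rw [e1, e2, e3, e4] at h
  linarith

theorem sd_not_submodular_of_strict {α : Type*} [DecidableEq α] [Fintype α]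
    (f : Finset α → ℝ) (hf : Submodular f) (S : Finset α)
    (hstrict : ∃ u v : α, u ≠ v ∧ (S ∩ {u, v}).card = 1 ∧
      ∃ X : Finset α, u ∉ X ∧ v ∉ X ∧
        f (X ∪ {u}) + f (X ∪ {v}) > f (X ∪ {u, v}) + f X) :
    ¬ Submodular (fun X => f (X ∆ S)) := by
  obtain ⟨u, v, huv, hcard, X, hux, hvx, hstr⟩ := hstrict
  intro hg
  have hmem : (u ∈ S ∧ v ∉ S) ∨ (u ∉ S ∧ v ∈ S) := by
    by_cases hu : u ∈ S <;> by_cases hv : v ∈ S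
    · exfalso
      have : S ∩ {u, v} = {u, v} := by
        ext a; simp only [Finset.mem_inter, Finset.mem_insert, Finset.mem_singleton]
        constructor
        · tauto
        · rintro (rfl | rfl) <;> simp [hu, hv]
      rw [this, Finset.card_insert_of_notMem (by simp [huv]), Finset.card_singleton] at hcard
      omega
    · exact Or.inl ⟨hu, hv⟩
    · exact Or.inr ⟨hu, hv⟩
    · exfalso
      have : S ∩ {u, v} = ∅ := by
        ext a; simp only [Finset.mem_inter, Finset.mem_insert, Finset.mem_singleton,
          Finset.notMem_empty, iff_false, not_and]
        rintro ha (rfl | rfl) <;> tauto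
      simp [this] at hcard
  rcases hmem with ⟨hus, hvs⟩ | ⟨hus, hvs⟩
  · exact key_aux f S u v X huv hus hvs hux hvx hstr hg
  · refine key_aux f S v u X huv.symm hvs hus hvx hux ?_ hg
    rw [Finset.pair_comm v u]
    linarith
end

section
/- For any finite set V and U ⊆ V, the function h_U : 2^V → ℝ defined by h_U(X) = min(|X ∩ U|, |U \ X|) is submodular. -/
theorem hU_submodular {α : Type*} [DecidableEq α] [Fintype α] (U : Finset α) :
    Submodular (fun X => (min (X ∩ U).card (U \ X).card : ℝ)) := by
  intro A B
  have h1 : (A ∪ B) ∩ U = (A ∩ U) ∪ (B ∩ U) := by ext x; simp; tauto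
  have h2 : (A ∩ B) ∩ U = (A ∩ U) ∩ (B ∩ U) := by ext x; simp
  have hc : ((A ∪ B) ∩ U).card + ((A ∩ B) ∩ U).card = (A ∩ U).card + (B ∩ U).card := by
    rw [h1, h2]; exact Finset.card_union_add_card_inter _ _
  have hsd : ∀ X : Finset α, (U \ X).card = U.card - (X ∩ U).card := by
    intro X
    have : U \ X = U \ (X ∩ U) := by ext x; simp
    rw [this, Finset.card_sdiff_of_subset (Finset.inter_subset_right)]
  have hA : (A ∩ U).card ≤ ((A ∪ B) ∩ U).card :=
    Finset.card_le_card (by rw [h1]; exact Finset.subset_union_left)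
  have hB : (B ∩ U).card ≤ ((A ∪ B) ∩ U).card :=
    Finset.card_le_card (by rw [h1]; exact Finset.subset_union_right)
  have hS : ((A ∪ B) ∩ U).card ≤ U.card :=
    Finset.card_le_card Finset.inter_subset_right
  simp only [ge_iff_le, hsd]
  rw [← Nat.cast_min, ← Nat.cast_min, ← Nat.cast_min, ← Nat.cast_min,
    ← Nat.cast_add, ← Nat.cast_add, Nat.cast_le]
  omega
end

section
/- Let U_1, …, U_k be a partition of a finite set V, 𝒰 = { ⋃_{i ∈ I} U_i : I ⊆ {1,…,k} }, and f(X) = min_{W ∈ 𝒰} |X △ W|. Then f is submodular, and moreover f(X) = Σ_{i=1}^k min(|X ∩ U_i|, |U_i \ X|) for all X ⊆ V. -/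
open scoped symmDiff

theorem partition_distance_submodular {α : Type*} [DecidableEq α] [Fintype α]
    (k : ℕ) (U : Fin k → Finset α)
    (hdisj : ∀ i j, i ≠ j → Disjoint (U i) (U j))
    (hcover : Finset.univ.biUnion U = Finset.univ)
    (hne : ∀ i, (U i).Nonempty)
    (𝒰 : Finset (Finset α))
    (h𝒰 : 𝒰 = (Finset.univ : Finset (Finset (Fin k))).image (fun I => I.biUnion U))
    (h𝒰ne : 𝒰.Nonempty)
    (f : Finset α → ℝ)
    (hfdef : ∀ X, f X = ((𝒰.inf' h𝒰ne (fun W => (X ∆ W).card) : ℕ) : ℝ)) :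
    Submodular f ∧
      ∀ X : Finset α, f X = ∑ i, ((min (X ∩ U i).card (U i \ X).card : ℕ) : ℝ) := by
  have hex : ∀ x : α, ∃ i, x ∈ U i := by
    intro x
    have : x ∈ Finset.univ.biUnion U := hcover ▸ Finset.mem_univ x
    simpa using this
  -- cardinality decomposes along the partition
  have hcard : ∀ S : Finset α, S.card = ∑ i, (S ∩ U i).card := by
    intro S
    have hS : S = Finset.univ.biUnion (fun i => S ∩ U i) := by
      ext x
      simp only [Finset.mem_biUnion, Finset.mem_univ, true_and, Finset.mem_inter]
      constructor
      · intro hx; obtain ⟨i, hi⟩ := hex x; exact ⟨i, hx, hi⟩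
      · rintro ⟨i, hx, -⟩; exact hx
    nth_rewrite 1 [hS]
    rw [Finset.card_biUnion]
    intro i _ j _ hij
    exact Finset.disjoint_of_subset_left Finset.inter_subset_right
      (Finset.disjoint_of_subset_right Finset.inter_subset_right (hdisj i j hij))
  -- the symmetric difference with a union of blocks, blockwise
  have hsymm : ∀ (X : Finset α) (I : Finset (Fin k)),
      (X ∆ I.biUnion U).card
        = ∑ i, (if i ∈ I then (U i \ X).card else (X ∩ U i).card) := by
    intro X I
    rw [hcard]
    apply Finset.sum_congr rfl
    intro i _
    have hWU : (I.biUnion U) ∩ U i = if i ∈ I then U i else ∅ := by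
      split
      · next h =>
        ext x
        simp only [Finset.mem_inter, Finset.mem_biUnion]
        exact ⟨fun hx => hx.2, fun hx => ⟨⟨i, h, hx⟩, hx⟩⟩
      · next h =>
        ext x
        simp only [Finset.mem_inter, Finset.mem_biUnion, Finset.notMem_empty, iff_false]
        rintro ⟨⟨j, hj, hxj⟩, hxi⟩
        have hne' : j ≠ i := fun e => h (e ▸ hj)
        exact Finset.disjoint_left.mp (hdisj j i hne') hxj hxi
    have hdist := inf_symmDiff_distrib_right (a := X) (b := I.biUnion U) (c := U i)
    simp only [Finset.inf_eq_inter] at hdist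
    rw [hdist, hWU]
    split
    · next h =>
      have hle : X ∩ U i ⊆ U i := Finset.inter_subset_right
      rw [symmDiff_of_le hle]
      congr 1
      ext x
      simp only [Finset.mem_sdiff, Finset.mem_inter]
      tauto
    · next h =>
      have : (X ∩ U i) ∆ (∅ : Finset α) = X ∩ U i := by
        rw [← Finset.bot_eq_empty, symmDiff_bot]
      rw [this]
  -- the nat-valued min formula
  have hmin : ∀ X : Finset α,
      𝒰.inf' h𝒰ne (fun W => (X ∆ W).card)
        = ∑ i, min (X ∩ U i).card (U i \ X).card := by
    intro X
    apply le_antisymm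
    · set I₀ : Finset (Fin k) :=
        Finset.univ.filter (fun i => (U i \ X).card ≤ (X ∩ U i).card) with hI₀
      have hmem : I₀.biUnion U ∈ 𝒰 := by
        rw [h𝒰]; exact Finset.mem_image_of_mem _ (Finset.mem_univ _)
      refine le_trans (Finset.inf'_le _ hmem) (le_of_eq ?_)
      rw [hsymm]
      apply Finset.sum_congr rfl
      intro i _
      by_cases h : i ∈ I₀
      · have h' : (U i \ X).card ≤ (X ∩ U i).card := by
          simpa [hI₀] using h
        simp [h, min_eq_right h']
      · have h' : ¬ (U i \ X).card ≤ (X ∩ U i).card := by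
          simpa [hI₀] using h
        simp [h]; omega
    · apply Finset.le_inf'
      intro W hW
      rw [h𝒰] at hW
      obtain ⟨I, -, rfl⟩ := Finset.mem_image.mp hW
      rw [hsymm]
      apply Finset.sum_le_sum
      intro i _
      split
      · exact min_le_right _ _
      · exact min_le_left _ _
  have hformula : ∀ X : Finset α,
      f X = ∑ i, ((min (X ∩ U i).card (U i \ X).card : ℕ) : ℝ) := by
    intro X
    rw [hfdef, hmin]
    push_cast
    rfl
  refine ⟨?_, hformula⟩
  intro A B
  rw [hformula, hformula, hformula, hformula, ← Finset.sum_add_distrib,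
    ← Finset.sum_add_distrib]
  apply Finset.sum_le_sum
  intro i _
  have h1 : ((A ∪ B) ∩ U i).card + ((A ∩ B) ∩ U i).card
      = (A ∩ U i).card + (B ∩ U i).card := by
    have e1 : (A ∪ B) ∩ U i = (A ∩ U i) ∪ (B ∩ U i) := by
      ext x; simp only [Finset.mem_inter, Finset.mem_union]; tauto
    have e2 : (A ∩ B) ∩ U i = (A ∩ U i) ∩ (B ∩ U i) := by
      ext x; simp only [Finset.mem_inter]; tauto
    rw [e1, e2, Finset.card_union_add_card_inter]
  have h2a : (A ∩ U i).card ≤ ((A ∪ B) ∩ U i).card :=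
    Finset.card_le_card (fun x hx => by
      simp only [Finset.mem_inter, Finset.mem_union] at *; tauto)
  have h2b : (B ∩ U i).card ≤ ((A ∪ B) ∩ U i).card :=
    Finset.card_le_card (fun x hx => by
      simp only [Finset.mem_inter, Finset.mem_union] at *; tauto)
  have h3 : ∀ X : Finset α, (X ∩ U i).card + (U i \ X).card = (U i).card := by
    intro X
    rw [Finset.inter_comm]
    exact Finset.card_inter_add_card_sdiff _ _
  have hA := h3 A; have hB := h3 B; have hU := h3 (A ∪ B); have hV := h3 (A ∩ B)
  have key : min ((A ∪ B) ∩ U i).card (U i \ (A ∪ B)).card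
      + min ((A ∩ B) ∩ U i).card (U i \ (A ∩ B)).card
      ≤ min (A ∩ U i).card (U i \ A).card + min (B ∩ U i).card (U i \ B).card := by
    omega
  exact_mod_cast key
end

section
/- Let U_1, …, U_k be a partition of a finite set V, 𝒰 = { ⋃_{i ∈ I} U_i : I ⊆ {1,…,k} }, and f(X) = min_{W ∈ 𝒰} |X △ W|. If S ⊆ V with S ∉ 𝒰, then the function g(X) = f(X △ S) is not submodular. -/
open scoped symmDiff

open scoped symmDiff in
private lemma sd_helper_un {α : Type*} [DecidableEq α] (S D : Finset α) (x y : α)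
    (hxS : x ∈ S) (hyS : y ∉ S) (hxD : x ∈ D) (hyD : y ∉ D) (hxy : x ≠ y) :
    ((S ∆ (D \ {x})) ∪ (S ∆ (D ∪ {y}))) ∆ S = (D \ {x}) ∪ {y} := by
  ext z
  by_cases hzx : z = x
  · subst hzx
    simp [Finset.mem_symmDiff, hxS, hxD, hxy]
  · by_cases hzy : z = y
    · subst hzy
      simp [Finset.mem_symmDiff, hyS, hyD, Ne.symm hxy]
    · simp only [Finset.mem_symmDiff, Finset.mem_union, Finset.mem_sdiff,
        Finset.mem_singleton, hzx, hzy]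
      tauto

open scoped symmDiff in
private lemma sd_helper_int {α : Type*} [DecidableEq α] (S D : Finset α) (x y : α)
    (hxS : x ∈ S) (hyS : y ∉ S) (hxD : x ∈ D) (hyD : y ∉ D) (hxy : x ≠ y) :
    ((S ∆ (D \ {x})) ∩ (S ∆ (D ∪ {y}))) ∆ S = D := by
  ext z
  by_cases hzx : z = x
  · subst hzx
    simp [Finset.mem_symmDiff, hxS, hxD, hxy]
  · by_cases hzy : z = y
    · subst hzy
      simp [Finset.mem_symmDiff, hyS, hyD, Ne.symm hxy]
    · simp only [Finset.mem_symmDiff, Finset.mem_inter, Finset.mem_union,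
        Finset.mem_sdiff, Finset.mem_singleton, hzx, hzy]
      tauto

theorem partition_distance_sd_not_submodular {α : Type*} [DecidableEq α] [Fintype α]
    (k : ℕ) (U : Fin k → Finset α)
    (hdisj : ∀ i j, i ≠ j → Disjoint (U i) (U j))
    (hcover : Finset.univ.biUnion U = Finset.univ)
    (hne : ∀ i, (U i).Nonempty)
    (𝒰 : Finset (Finset α))
    (h𝒰 : 𝒰 = (Finset.univ : Finset (Finset (Fin k))).image (fun I => I.biUnion U))
    (h𝒰ne : 𝒰.Nonempty)
    (f : Finset α → ℝ)
    (hfdef : ∀ X, f X = ((𝒰.inf' h𝒰ne (fun W => (X ∆ W).card) : ℕ) : ℝ))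
    (S : Finset α) (hS : S ∉ 𝒰) :
    ¬ Submodular (fun X => f (X ∆ S)) := by
  intro hsub
  -- Step 1: find a block split by S
  have hstep : ∃ i, ∃ x ∈ S ∩ U i, ∃ y ∈ U i, y ∉ S := by
    by_contra hcon
    push_neg at hcon
    apply hS
    rw [h𝒰, Finset.mem_image]
    refine ⟨Finset.univ.filter (fun j => U j ⊆ S), Finset.mem_univ _, ?_⟩
    apply Finset.Subset.antisymm
    · intro z hz
      rw [Finset.mem_biUnion] at hz
      obtain ⟨j, hj, hzj⟩ := hz
      exact (Finset.mem_filter.mp hj).2 hzj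
    · intro z hz
      have hz2 : z ∈ Finset.univ.biUnion U := by rw [hcover]; exact Finset.mem_univ z
      rw [Finset.mem_biUnion] at hz2
      obtain ⟨j, _, hzj⟩ := hz2
      rw [Finset.mem_biUnion]
      refine ⟨j, ?_, hzj⟩
      rw [Finset.mem_filter]
      exact ⟨Finset.mem_univ _, fun w hw => hcon j z (Finset.mem_inter.mpr ⟨hz, hzj⟩) w hw⟩
  obtain ⟨i, x, hx, y, hyU, hyS⟩ := hstep
  obtain ⟨hxS, hxU⟩ := Finset.mem_inter.mp hx
  have hxy : x ≠ y := fun h => hyS (h ▸ hxS)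
  -- Key formula: for Y ⊆ U i, f Y = min |Y| (|U i| - |Y|)
  have key : ∀ Y : Finset α, Y ⊆ U i → f Y = ((min Y.card ((U i).card - Y.card) : ℕ) : ℝ) := by
    intro Y hY
    rw [hfdef]
    congr 1
    apply le_antisymm
    · apply le_min
      · have hEmptyMem : (∅ : Finset α) ∈ 𝒰 := by
          rw [h𝒰, Finset.mem_image]
          exact ⟨∅, Finset.mem_univ _, by simp⟩
        refine le_trans (Finset.inf'_le (fun W => (Y ∆ W).card) hEmptyMem) ?_
        rw [show (∅ : Finset α) = ⊥ from rfl, symmDiff_bot]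
      · have hUi : U i ∈ 𝒰 := by
          rw [h𝒰, Finset.mem_image]
          exact ⟨{i}, Finset.mem_univ _, by simp⟩
        refine le_trans (Finset.inf'_le (fun W => (Y ∆ W).card) hUi) ?_
        rw [symmDiff_of_le hY, Finset.card_sdiff_of_subset hY]
    · apply Finset.le_inf'
      intro W hW
      rw [h𝒰, Finset.mem_image] at hW
      obtain ⟨I, _, rfl⟩ := hW
      by_cases hi : i ∈ I
      · have hYW : Y ⊆ I.biUnion U := hY.trans (Finset.subset_biUnion_of_mem U hi)
        refine le_trans (min_le_right _ _) ?_
        rw [symmDiff_of_le hYW]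
        calc (U i).card - Y.card = (U i \ Y).card := (Finset.card_sdiff_of_subset hY).symm
          _ ≤ (I.biUnion U \ Y).card :=
            Finset.card_le_card (Finset.sdiff_subset_sdiff (Finset.subset_biUnion_of_mem U hi) le_rfl)
      · have hd : Disjoint Y (I.biUnion U) := by
          rw [Finset.disjoint_biUnion_right]
          intro j hj
          exact Disjoint.mono_left hY (hdisj i j (fun h => hi (h ▸ hj)))
        refine le_trans (min_le_left _ _) ?_
        rw [hd.symmDiff_eq_sup]
        exact Finset.card_le_card Finset.subset_union_left
  -- pick D
  set n := (U i).card with hn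
  have hn2 : 2 ≤ n := Finset.one_lt_card.mpr ⟨x, hxU, y, hyU, hxy⟩
  set m := n / 2 with hm
  have hm1 : 1 ≤ m := by omega
  have hxt : ({x} : Finset α) ⊆ U i \ {y} := by
    simp [Finset.singleton_subset_iff, hxU, hxy]
  have hct : (U i \ {y}).card = n - 1 := by
    rw [Finset.card_sdiff_of_subset (by simpa using hyU)]
    simp [hn]
  obtain ⟨D, hxD', hDsub, hDcard⟩ :=
    Finset.exists_subsuperset_card_eq hxt (by simpa using hm1) (by omega)
  have hxD : x ∈ D := hxD' (Finset.mem_singleton_self x)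
  have hyD : y ∉ D := fun h => (Finset.mem_sdiff.mp (hDsub h)).2 (Finset.mem_singleton_self y)
  have hDU : D ⊆ U i := hDsub.trans Finset.sdiff_subset
  -- the four sets
  have hA : (S ∆ (D \ {x})) ∆ S = D \ {x} := by
    rw [symmDiff_comm, symmDiff_symmDiff_cancel_left]
  have hB : (S ∆ (D ∪ {y})) ∆ S = D ∪ {y} := by
    rw [symmDiff_comm, symmDiff_symmDiff_cancel_left]
  have hUn := sd_helper_un S D x y hxS hyS hxD hyD hxy
  have hInt := sd_helper_int S D x y hxS hyS hxD hyD hxy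
  -- cards
  have c1 : (D \ {x}).card = m - 1 := by
    rw [Finset.card_sdiff_of_subset (by simpa using hxD)]
    simp [hDcard]
  have c2 : (D ∪ {y}).card = m + 1 := by
    rw [Finset.card_union_of_disjoint (Finset.disjoint_singleton_right.mpr hyD)]
    simp [hDcard]
  have c3 : ((D \ {x}) ∪ {y}).card = m := by
    rw [Finset.card_union_of_disjoint]
    · rw [c1]; simp; omega
    · exact Finset.disjoint_singleton_right.mpr (fun h => hyD (Finset.mem_sdiff.mp h).1)
  -- subsets
  have s1 : D \ {x} ⊆ U i := Finset.sdiff_subset.trans hDU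
  have s2 : D ∪ {y} ⊆ U i := Finset.union_subset hDU (by simpa using hyU)
  have s3 : (D \ {x}) ∪ {y} ⊆ U i := Finset.union_subset s1 (by simpa using hyU)
  -- apply submodularity
  have h := hsub (S ∆ (D \ {x})) (S ∆ (D ∪ {y}))
  simp only at h
  rw [hA, hB, hUn, hInt, key _ s1, key _ s2, key _ s3, key _ hDU, c1, c2, c3, hDcard] at h
  rw [ge_iff_le, ← Nat.cast_add, ← Nat.cast_add, Nat.cast_le] at h
  omega
end

section
/- Let ρ : 2^V → ℝ be submodular with ρ(∅) = 0, and suppose U ⊆ V (U nonempty, U ≠ V) satisfies ρ(V) = ρ(U) + ρ(V \ U). Then ρ(X) = ρ(X ∩ U) + ρ(X ∩ (V \ U)) for every X ⊆ V. -/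
theorem separable_decomposition {α : Type*} [DecidableEq α] [Fintype α]
    (ρ : Finset α → ℝ) (hρ : Submodular ρ) (h0 : ρ ∅ = 0)
    (U : Finset α) (hUne : U.Nonempty) (hUV : U ≠ Finset.univ)
    (hsep : ρ Finset.univ = ρ U + ρ Uᶜ) :
    ∀ X : Finset α, ρ X = ρ (X ∩ U) + ρ (X ∩ Uᶜ) := by
  intro X
  have e1 : (X ∩ U) ∪ (X ∩ Uᶜ) = X := by
    ext a; simp [Finset.mem_union, Finset.mem_inter, Finset.mem_compl]; tauto
  have e2 : (X ∩ U) ∩ (X ∩ Uᶜ) = ∅ := by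
    ext a; simp [Finset.mem_inter, Finset.mem_compl]; tauto
  have e3 : (X ∪ U) ∪ Uᶜ = Finset.univ := by
    ext a; simp [Finset.mem_union, Finset.mem_compl]
  have e4 : (X ∪ U) ∩ Uᶜ = X ∩ Uᶜ := by
    ext a; simp [Finset.mem_union, Finset.mem_inter, Finset.mem_compl]; tauto
  have h1 := hρ (X ∩ U) (X ∩ Uᶜ)
  rw [e1, e2, h0] at h1
  have h2 := hρ X U
  have h3 := hρ (X ∪ U) Uᶜ
  rw [e3, e4, hsep] at h3
  linarith
end

section
/- Let f : 2^V → ℝ be submodular and U ⊆ V with f(V) + f(∅) = f(U) + f(V \ U). Then f(X) + f(∅) = f(X ∩ U) + f(X ∩ (V \ U)) for every X ⊆ V. -/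
theorem separable_decomposition' {α : Type*} [DecidableEq α] [Fintype α]
    (f : Finset α → ℝ) (hf : Submodular f)
    (U : Finset α)
    (hsep : f Finset.univ + f ∅ = f U + f Uᶜ) :
    ∀ X : Finset α, f X + f ∅ = f (X ∩ U) + f (X ∩ Uᶜ) := by
  intro X
  have e1 : (X ∩ U) ∪ (X ∩ Uᶜ) = X := by ext a; simp; tauto
  have e2 : (X ∩ U) ∩ (X ∩ Uᶜ) = ∅ := by ext a; simp; tauto
  have e3 : (X ∪ U) ∪ Uᶜ = Finset.univ := by ext a; simp
  have e4 : (X ∪ U) ∩ Uᶜ = X ∩ Uᶜ := by ext a; simp; tauto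
  have h1 := hf (X ∩ U) (X ∩ Uᶜ)
  rw [e1, e2] at h1
  have h2 := hf X U
  have h3 := hf (X ∪ U) Uᶜ
  rw [e3, e4] at h3
  linarith
end

section
/- Let f : 2^V → ℝ be submodular and U ⊆ V with f(V) + f(∅) = f(U) + f(V \ U). Then for every u ∈ U, v ∈ V \ U, and X ⊆ V \ {u,v}, equality f(X ∪ {u}) + f(X ∪ {v}) = f(X ∪ {u,v}) + f(X) holds. -/
theorem separable_two_face_equalities {α : Type*} [DecidableEq α] [Fintype α]
    (f : Finset α → ℝ) (hf : Submodular f)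
    (U : Finset α)
    (hsep : f Finset.univ + f ∅ = f U + f Uᶜ) :
    ∀ u v : α, u ∈ U → v ∉ U → ∀ X : Finset α, u ∉ X → v ∉ X →
      f (X ∪ {u}) + f (X ∪ {v}) = f (X ∪ {u, v}) + f X := by
  intro u v hu hv X hux hvx
  have sep : ∀ S : Finset α, f S + f ∅ = f (S ∩ U) + f (S ∩ Uᶜ) := by
    intro S
    have h1 := hf (S ∩ U) (S ∩ Uᶜ)
    have e1 : (S ∩ U) ∪ (S ∩ Uᶜ) = S := by
      ext x; simp [Finset.mem_compl]; tauto
    have e2 : (S ∩ U) ∩ (S ∩ Uᶜ) = ∅ := by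
      ext x; simp [Finset.mem_compl]; tauto
    rw [e1, e2] at h1
    have h2 := hf S Uᶜ
    have h3 := hf (S ∪ Uᶜ) U
    have e3 : (S ∪ Uᶜ) ∪ U = Finset.univ := by
      ext x; simp [Finset.mem_compl]; tauto
    have e4 : (S ∪ Uᶜ) ∩ U = S ∩ U := by
      ext x; simp [Finset.mem_compl]; tauto
    rw [e3, e4] at h3
    linarith
  have s1 := sep (X ∪ {u})
  have s2 := sep (X ∪ {v})
  have s3 := sep (X ∪ {u, v})
  have s4 := sep X
  have k1 : (X ∪ {u}) ∩ U = (X ∩ U) ∪ {u} := by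
    ext x
    by_cases hx1 : x = u <;> by_cases hx2 : x = v <;>
      simp_all [Finset.mem_compl]
  have k2 : (X ∪ {u}) ∩ Uᶜ = X ∩ Uᶜ := by
    ext x
    by_cases hx1 : x = u <;> by_cases hx2 : x = v <;>
      simp_all [Finset.mem_compl]
  have k3 : (X ∪ {v}) ∩ U = X ∩ U := by
    ext x
    by_cases hx1 : x = u <;> by_cases hx2 : x = v <;>
      simp_all [Finset.mem_compl]
  have k4 : (X ∪ {v}) ∩ Uᶜ = (X ∩ Uᶜ) ∪ {v} := by
    ext x
    by_cases hx1 : x = u <;> by_cases hx2 : x = v <;>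
      simp_all [Finset.mem_compl]
  have k5 : (X ∪ {u, v}) ∩ U = (X ∩ U) ∪ {u} := by
    ext x
    by_cases hx1 : x = u <;> by_cases hx2 : x = v <;>
      simp_all [Finset.mem_compl]
  have k6 : (X ∪ {u, v}) ∩ Uᶜ = (X ∩ Uᶜ) ∪ {v} := by
    ext x
    by_cases hx1 : x = u <;> by_cases hx2 : x = v <;>
      simp_all [Finset.mem_compl]
  rw [k1, k2] at s1
  rw [k3, k4] at s2
  rw [k5, k6] at s3
  linarith
end

section
/- Let f : 2^V → ℝ be a set function and U ⊆ V. Suppose that for every u ∈ U, v ∈ V \ U, and X ⊆ V \ {u,v}, equality f(X ∪ {u}) + f(X ∪ {v}) = f(X ∪ {u,v}) + f(X) holds. Then f(X) + f(∅) = f(X ∩ U) + f(X ∩ (V \ U)) for every X ⊆ V; in particular f(V) + f(∅) = f(U) + f(V \ U). -/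
private lemma aux_lemma1 {α : Type*} [DecidableEq α]
    (f : Finset α → ℝ) (U : Finset α)
    (heq : ∀ u v : α, u ∈ U → v ∉ U → ∀ X : Finset α, u ∉ X → v ∉ X →
      f (X ∪ {u}) + f (X ∪ {v}) = f (X ∪ {u, v}) + f X)
    (u : α) (hu : u ∈ U) :
    ∀ B : Finset α, (∀ v ∈ B, v ∉ U) → ∀ X : Finset α, u ∉ X → Disjoint X B →
      f (X ∪ B ∪ {u}) + f X = f (X ∪ {u}) + f (X ∪ B) := by
  intro B
  induction B using Finset.induction_on with
  | empty => intro _ X _ _; simp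
  | insert v B' hvB ih =>
    intro hB X huX hdisj
    have hv : v ∉ U := hB v (Finset.mem_insert_self v B')
    have huB' : u ∉ X ∪ B' := by
      simp only [Finset.mem_union, not_or]
      exact ⟨huX, fun h => hB u (Finset.mem_insert_of_mem h) hu⟩
    have hvB' : v ∉ X ∪ B' := by
      simp only [Finset.mem_union, not_or]
      refine ⟨fun h => ?_, hvB⟩
      exact (Finset.disjoint_left.mp hdisj h) (Finset.mem_insert_self v B')
    have h1 := heq u v hu hv (X ∪ B') huB' hvB'
    have h2 := ih (fun w hw => hB w (Finset.mem_insert_of_mem hw)) X huX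
      (hdisj.mono_right (Finset.subset_insert v B'))
    have e1 : X ∪ insert v B' = (X ∪ B') ∪ {v} := by
      ext w; simp [Finset.mem_insert]
    have e2 : X ∪ insert v B' ∪ {u} = (X ∪ B') ∪ {u, v} := by
      ext w; simp [Finset.mem_insert]; tauto
    rw [e2, e1]
    linarith

private lemma aux_lemma2 {α : Type*} [DecidableEq α]
    (f : Finset α → ℝ) (U : Finset α)
    (heq : ∀ u v : α, u ∈ U → v ∉ U → ∀ X : Finset α, u ∉ X → v ∉ X →
      f (X ∪ {u}) + f (X ∪ {v}) = f (X ∪ {u, v}) + f X) :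
    ∀ A : Finset α, (∀ a ∈ A, a ∈ U) → ∀ B : Finset α, (∀ v ∈ B, v ∉ U) →
      f (A ∪ B) + f ∅ = f A + f B := by
  intro A
  induction A using Finset.induction_on with
  | empty => intro _ B _; simp [add_comm]
  | insert u A' huA ih =>
    intro hA B hB
    have hu : u ∈ U := hA u (Finset.mem_insert_self u A')
    have hdisj : Disjoint A' B := by
      rw [Finset.disjoint_left]
      intro a ha hab
      exact hB a hab (hA a (Finset.mem_insert_of_mem ha))
    have h1 := aux_lemma1 f U heq u hu B hB A' huA hdisj
    have h2 := ih (fun a ha => hA a (Finset.mem_insert_of_mem ha)) B hB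
    have e1 : insert u A' ∪ B = A' ∪ B ∪ {u} := by
      ext w; simp [Finset.mem_insert]
    have e2 : insert u A' = A' ∪ {u} := by
      ext w; simp [Finset.mem_insert]
    rw [e1, e2]
    linarith

theorem two_face_equalities_decompose {α : Type*} [DecidableEq α] [Fintype α]
    (f : Finset α → ℝ) (U : Finset α)
    (heq : ∀ u v : α, u ∈ U → v ∉ U → ∀ X : Finset α, u ∉ X → v ∉ X →
      f (X ∪ {u}) + f (X ∪ {v}) = f (X ∪ {u, v}) + f X) :
    (∀ X : Finset α, f X + f ∅ = f (X ∩ U) + f (X ∩ Uᶜ)) ∧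
      f Finset.univ + f ∅ = f U + f Uᶜ := by
  have main : ∀ X : Finset α, f X + f ∅ = f (X ∩ U) + f (X ∩ Uᶜ) := by
    intro X
    have h := aux_lemma2 f U heq (X ∩ U) (fun a ha => (Finset.mem_inter.mp ha).2)
      (X ∩ Uᶜ) (fun v hv => by
        have := (Finset.mem_inter.mp hv).2
        simpa using this)
    have e : X ∩ U ∪ X ∩ Uᶜ = X := by
      ext w; simp; tauto
    rw [e] at h
    exact h
  refine ⟨main, ?_⟩
  have := main Finset.univ
  simpa using this
end

section
/- Let f : 2^V → ℝ be strictly submodular, S ⊆ V, and g(X) = f(X △ S). Fix u* ∈ V and define T = { v ∈ V \ {u*} : g({u*}) + g({v}) - g({u*,v}) - g(∅) < 0 }. Then S △ T ∈ {∅, V}, and the function h(X) = g(X △ T) is submodular. -/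
open scoped symmDiff

def StrictlySubmodular {α : Type*} [DecidableEq α] (f : Finset α → ℝ) : Prop :=
  ∀ A B : Finset α, (A \ B).Nonempty → (B \ A).Nonempty →
    f A + f B > f (A ∪ B) + f (A ∩ B)

theorem submodular_of_strict {α : Type*} [DecidableEq α] (f : Finset α → ℝ)
    (hf : StrictlySubmodular f) : Submodular f := by
  intro A B
  rcases (A \ B).eq_empty_or_nonempty with h1 | h1
  · have hAB : A ⊆ B := Finset.sdiff_eq_empty_iff_subset.mp h1
    rw [Finset.union_eq_right.mpr hAB, Finset.inter_eq_left.mpr hAB]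
    linarith
  rcases (B \ A).eq_empty_or_nonempty with h2 | h2
  · have hBA : B ⊆ A := Finset.sdiff_eq_empty_iff_subset.mp h2
    rw [Finset.union_eq_left.mpr hBA, Finset.inter_eq_right.mpr hBA]
  exact le_of_lt (hf A B h1 h2)

theorem strict_submodular_canonical_set {α : Type*} [DecidableEq α] [Fintype α]
    (f : Finset α → ℝ) (hf : StrictlySubmodular f)
    (S : Finset α) (g : Finset α → ℝ) (hg : ∀ X, g X = f (X ∆ S))
    (u : α) (T : Finset α)
    (hT : ∀ v : α, v ∈ T ↔ v ≠ u ∧ g {u} + g {v} - g ({u, v} : Finset α) - g ∅ < 0) :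
    Submodular (fun X => g (X ∆ T)) ∧ (S ∆ T = ∅ ∨ S ∆ T = Finset.univ) := by
  have key : ∀ v : α, v ≠ u →
      ((g {u} + g {v} - g ({u, v} : Finset α) - g ∅ < 0) ↔ ¬(u ∈ S ↔ v ∈ S)) := by
    intro v hvu
    simp only [hg]
    by_cases hu : u ∈ S <;> by_cases hv : v ∈ S
    · -- both in S : not < 0, iff holds so RHS false
      have e1 : ({u} : Finset α) ∆ S ∪ ({v} : Finset α) ∆ S = (∅ : Finset α) ∆ S := by
        ext a
        by_cases h1 : a = u <;> by_cases h2 : a = v <;>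
          simp_all [Finset.mem_symmDiff]
      have e2 : ({u} : Finset α) ∆ S ∩ ({v} : Finset α) ∆ S = ({u, v} : Finset α) ∆ S := by
        ext a
        by_cases h1 : a = u <;> by_cases h2 : a = v <;>
          simp_all [Finset.mem_symmDiff]
      have h1 : (({u} : Finset α) ∆ S \ ({v} : Finset α) ∆ S).Nonempty := by
        refine ⟨v, ?_⟩
        simp [Finset.mem_symmDiff, hv, hvu, Ne.symm hvu]
      have h2 : (({v} : Finset α) ∆ S \ ({u} : Finset α) ∆ S).Nonempty := by
        refine ⟨u, ?_⟩
        simp [Finset.mem_symmDiff, hu, hvu, Ne.symm hvu]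
      have := hf _ _ h1 h2
      rw [e1, e2] at this
      constructor
      · intro h; linarith
      · intro h; exact absurd (Iff.intro (fun _ => hv) (fun _ => hu)) h
    · -- u ∈ S, v ∉ S
      have e1 : (∅ : Finset α) ∆ S ∪ ({u, v} : Finset α) ∆ S = ({v} : Finset α) ∆ S := by
        ext a
        by_cases h1 : a = u <;> by_cases h2 : a = v <;>
          simp_all [Finset.mem_symmDiff]
      have e2 : (∅ : Finset α) ∆ S ∩ ({u, v} : Finset α) ∆ S = ({u} : Finset α) ∆ S := by
        ext a
        by_cases h1 : a = u <;> by_cases h2 : a = v <;>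
          simp_all [Finset.mem_symmDiff]
      have h1 : ((∅ : Finset α) ∆ S \ ({u, v} : Finset α) ∆ S).Nonempty := by
        refine ⟨u, ?_⟩
        simp [Finset.mem_symmDiff, hu]
      have h2 : (({u, v} : Finset α) ∆ S \ (∅ : Finset α) ∆ S).Nonempty := by
        refine ⟨v, ?_⟩
        simp [Finset.mem_symmDiff, hv]
      have := hf _ _ h1 h2
      rw [e1, e2] at this
      constructor
      · intro _ h; exact hv (h.mp hu)
      · intro _; linarith
    · -- u ∉ S, v ∈ S
      have e1 : (∅ : Finset α) ∆ S ∪ ({u, v} : Finset α) ∆ S = ({u} : Finset α) ∆ S := by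
        ext a
        by_cases h1 : a = u <;> by_cases h2 : a = v <;>
          simp_all [Finset.mem_symmDiff]
      have e2 : (∅ : Finset α) ∆ S ∩ ({u, v} : Finset α) ∆ S = ({v} : Finset α) ∆ S := by
        ext a
        by_cases h1 : a = u <;> by_cases h2 : a = v <;>
          simp_all [Finset.mem_symmDiff]
      have h1 : ((∅ : Finset α) ∆ S \ ({u, v} : Finset α) ∆ S).Nonempty := by
        refine ⟨v, ?_⟩
        simp [Finset.mem_symmDiff, hv]
      have h2 : (({u, v} : Finset α) ∆ S \ (∅ : Finset α) ∆ S).Nonempty := by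
        refine ⟨u, ?_⟩
        simp [Finset.mem_symmDiff, hu]
      have := hf _ _ h1 h2
      rw [e1, e2] at this
      constructor
      · intro _ h; exact hu (h.mpr hv)
      · intro _; linarith
    · -- both out of S
      have e1 : ({u} : Finset α) ∆ S ∪ ({v} : Finset α) ∆ S = ({u, v} : Finset α) ∆ S := by
        ext a
        by_cases h1 : a = u <;> by_cases h2 : a = v <;>
          simp_all [Finset.mem_symmDiff]
      have e2 : ({u} : Finset α) ∆ S ∩ ({v} : Finset α) ∆ S = (∅ : Finset α) ∆ S := by
        ext a
        by_cases h1 : a = u <;> by_cases h2 : a = v <;>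
          simp_all [Finset.mem_symmDiff]
      have h1 : (({u} : Finset α) ∆ S \ ({v} : Finset α) ∆ S).Nonempty := by
        refine ⟨u, ?_⟩
        simp [Finset.mem_symmDiff, hu, hvu, Ne.symm hvu]
      have h2 : (({v} : Finset α) ∆ S \ ({u} : Finset α) ∆ S).Nonempty := by
        refine ⟨v, ?_⟩
        simp [Finset.mem_symmDiff, hv, hvu, Ne.symm hvu]
      have := hf _ _ h1 h2
      rw [e1, e2] at this
      constructor
      · intro h; linarith
      · intro h; exact absurd (Iff.intro (fun h' => absurd h' hu) (fun h' => absurd h' hv)) h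
  have hTeq : T = if u ∈ S then Sᶜ else S := by
    by_cases hu : u ∈ S <;> simp only [hu, if_true, if_false] <;> ext v <;>
      rw [hT v] <;> by_cases hvu : v = u
    · subst hvu; simp [hu]
    · rw [key v hvu]; simp [hvu, hu]
    · subst hvu; simp [hu]
    · rw [key v hvu]; simp [hvu, hu]
  have hST : S ∆ T = (if u ∈ S then (Finset.univ : Finset α) else ∅) := by
    rw [hTeq]
    by_cases hu : u ∈ S <;> simp [hu]
  have hsub : Submodular (fun X : Finset α => g (X ∆ T)) := by
    have hshift : ∀ X : Finset α, X ∆ T ∆ S = X ∆ (S ∆ T) := by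
      intro X
      rw [symmDiff_assoc, symmDiff_comm T S]
    by_cases hu : u ∈ S
    · have hSTu : S ∆ T = Finset.univ := by rw [hST]; simp [hu]
      intro A B
      simp only [hg, hshift, hSTu, ← Finset.top_eq_univ, symmDiff_top, hnot_eq_compl]
      have := submodular_of_strict f hf Aᶜ Bᶜ
      rw [← Finset.compl_inter, ← Finset.compl_union] at this
      linarith
    · have hSTu : S ∆ T = ∅ := by rw [hST]; simp [hu]
      intro A B
      simp only [hg, hshift, hSTu, ← Finset.bot_eq_empty, symmDiff_bot]
      exact submodular_of_strict f hf A B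
  refine ⟨hsub, ?_⟩
  rw [hST]
  by_cases hu : u ∈ S <;> simp [hu]
end
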